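/- Let M be a complete pointed metric space and p ≠ q ∈ M with metric segment [p,q] = {p,q}. Then the molecule m_{pq} = (δ(p) - δ(q))/d(p,q) is an exposed point of the closed unit ball of F(M): the function f_{pq}(t) = (d(p,q)/2)·((d(t,q)-d(t,p))/(d(t,q)+d(t,p)) - (d(0,q)-d(0,p))/(d(0,q)+d(0,p))) ∈ Lip₀(M) has norm 1, satisfies ⟨m_{pq}, f_{pq}⟩ = 1, and ⟨μ, f_{pq}⟩ < 1 for every μ in the closed unit ball of F(M) with μ ≠ m_{pq}. -/

import Mathlib

noncomputable section

open Metric Set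

/-- The space of real-valued Lipschitz functions on `M` vanishing at `base`. -/
structure Lip0 (M : Type*) [MetricSpace M] (base : M) where
  toFun : M → ℝ
  exists_lip' : ∃ K, LipschitzWith K toFun
  map_base' : toFun base = 0

namespace Lip0

variable {M : Type*} [MetricSpace M] {base : M}

instance : FunLike (Lip0 M base) M ℝ where
  coe := toFun
  coe_injective := by rintro ⟨f, _, _⟩ ⟨g, _, _⟩ h; simpa using h

@[simp] lemma map_base (f : Lip0 M base) : f base = 0 := f.map_base'

/-- The set of (nonnegative real) Lipschitz constants of `f`. -/
def lipSet (f : Lip0 M base) : Set ℝ :=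
  {K | 0 ≤ K ∧ ∀ x y, |f x - f y| ≤ K * dist x y}

lemma lipSet_nonempty (f : Lip0 M base) : (lipSet f).Nonempty := by
  obtain ⟨K, hK⟩ := f.exists_lip'
  exact ⟨K, K.coe_nonneg, fun x y => by
    have h := hK.dist_le_mul x y; rw [Real.dist_eq] at h; exact h⟩

lemma lipSet_bddBelow (f : Lip0 M base) : BddBelow (lipSet f) :=
  ⟨0, fun K hK => hK.1⟩

lemma sInf_mem_lipSet (f : Lip0 M base) : sInf (lipSet f) ∈ lipSet f := by
  constructor
  · exact le_csInf (lipSet_nonempty f) fun K hK => hK.1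
  · intro x y
    rcases eq_or_ne x y with rfl | hxy
    · simp
    · have hd : 0 < dist x y := dist_pos.2 hxy
      rw [← div_le_iff₀ hd]
      exact le_csInf (lipSet_nonempty f) fun K hK => (div_le_iff₀ hd).2 (hK.2 x y)

instance : Zero (Lip0 M base) :=
  ⟨⟨fun _ => 0, ⟨0, LipschitzWith.const 0⟩, rfl⟩⟩

instance : Add (Lip0 M base) :=
  ⟨fun f g => ⟨fun t => f t + g t, by
    obtain ⟨Kf, hf⟩ := f.exists_lip'; obtain ⟨Kg, hg⟩ := g.exists_lip'
    exact ⟨Kf + Kg, hf.add hg⟩, by simp⟩⟩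

instance : Neg (Lip0 M base) :=
  ⟨fun f => ⟨fun t => -f t, by
    obtain ⟨Kf, hf⟩ := f.exists_lip'
    exact ⟨Kf, hf.neg⟩, by simp⟩⟩

def rsmul (c : ℝ) (f : Lip0 M base) : Lip0 M base :=
  ⟨fun t => c * f t, by
    obtain ⟨Kf, hf⟩ := f.exists_lip'
    refine ⟨⟨|c|, abs_nonneg c⟩ * Kf, LipschitzWith.of_dist_le_mul fun x y => ?_⟩
    have h1 : dist (c * f x) (c * f y) = |c| * |f x - f y| := by
      rw [Real.dist_eq, ← abs_mul, mul_sub]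
    have h2 := hf.dist_le_mul x y
    rw [Real.dist_eq] at h2
    rw [h1]
    calc |c| * |f x - f y| ≤ |c| * (Kf * dist x y) :=
          mul_le_mul_of_nonneg_left h2 (abs_nonneg c)
      _ = (⟨|c|, abs_nonneg c⟩ * Kf : NNReal) * dist x y := by show |c| * ((Kf : ℝ) * dist x y) = (|c| * (Kf : ℝ)) * dist x y; ring, by simp⟩

instance : SMul ℝ (Lip0 M base) := ⟨rsmul⟩
instance : SMul ℕ (Lip0 M base) := ⟨fun n => rsmul (n : ℝ)⟩
instance : SMul ℤ (Lip0 M base) := ⟨fun n => rsmul (n : ℝ)⟩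
instance : Sub (Lip0 M base) := ⟨fun f g => f + -g⟩

@[simp] lemma coe_zero : ⇑(0 : Lip0 M base) = fun _ => 0 := rfl
@[simp] lemma coe_add (f g : Lip0 M base) : ⇑(f + g) = fun t => f t + g t := rfl
@[simp] lemma coe_neg (f : Lip0 M base) : ⇑(-f) = fun t => -f t := rfl
@[simp] lemma coe_smul (c : ℝ) (f : Lip0 M base) : ⇑(c • f) = fun t => c * f t := rfl
@[simp] lemma coe_sub (f g : Lip0 M base) : ⇑(f - g) = fun t => f t - g t := by
  show (fun t => f t + -(g t)) = _
  funext t; ring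

instance : AddCommGroup (Lip0 M base) :=
  (DFunLike.coe_injective (F := Lip0 M base)).addCommGroup _
    rfl (fun _ _ => rfl) (fun _ => rfl) (fun f g => coe_sub f g)
    (fun f n => by funext t; show (n : ℝ) * f t = n • f t; simp)
    (fun f n => by funext t; show (n : ℝ) * f t = n • f t; simp)

instance : Module ℝ (Lip0 M base) :=
  (DFunLike.coe_injective (F := Lip0 M base)).module ℝ
    { toFun := fun f : Lip0 M base => ⇑f, map_zero' := rfl, map_add' := fun _ _ => rfl }
    (fun _ _ => rfl)

lemma lipSet_neg (f : Lip0 M base) : lipSet (-f) = lipSet f := by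
  unfold lipSet
  ext K
  have e : ∀ x y : M, (-f) x - (-f) y = -(f x - f y) := fun x y => by
    show -f x - -f y = -(f x - f y); ring
  constructor <;> rintro ⟨h0, h⟩ <;> refine ⟨h0, fun x y => ?_⟩
  · have := h x y; rwa [e, abs_neg] at this
  · rw [e, abs_neg]; exact h x y

instance : NormedAddCommGroup (Lip0 M base) :=
  AddGroupNorm.toNormedAddCommGroup
  { toFun := fun f => sInf (lipSet f)
    map_zero' := by
      apply le_antisymm
      · exact csInf_le (lipSet_bddBelow _) ⟨le_refl 0, fun x y => by simp⟩
      · exact (sInf_mem_lipSet (0 : Lip0 M base)).1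
    add_le' := fun f g => by
      apply csInf_le (lipSet_bddBelow _)
      refine ⟨add_nonneg (sInf_mem_lipSet f).1 (sInf_mem_lipSet g).1, fun x y => ?_⟩
      have hf := (sInf_mem_lipSet f).2 x y
      have hg := (sInf_mem_lipSet g).2 x y
      calc |(f + g) x - (f + g) y| = |(f x - f y) + (g x - g y)| := by
            simp [coe_add]; ring_nf
        _ ≤ |f x - f y| + |g x - g y| := abs_add_le _ _
        _ ≤ sInf (lipSet f) * dist x y + sInf (lipSet g) * dist x y := add_le_add hf hg
        _ = (sInf (lipSet f) + sInf (lipSet g)) * dist x y := by ring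
    neg' := fun f => by show sInf (lipSet (-f)) = sInf (lipSet f); rw [lipSet_neg]
    eq_zero_of_map_eq_zero' := fun f hf => by
      have hf' : sInf (lipSet f) = 0 := hf
      apply DFunLike.coe_injective
      funext t
      have h := (sInf_mem_lipSet f).2 t base
      rw [hf', zero_mul] at h
      have h0 : f t - f base = 0 := abs_nonpos_iff.1 h
      show f t = (0 : Lip0 M base) t
      have : (0 : Lip0 M base) t = 0 := rfl
      rw [this]
      simpa using h0 }

lemma norm_def (f : Lip0 M base) : ‖f‖ = sInf (lipSet f) := rfl

instance : NormedSpace ℝ (Lip0 M base) where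
  norm_smul_le c f := by
    rw [norm_def, norm_def, Real.norm_eq_abs]
    apply csInf_le (lipSet_bddBelow _)
    refine ⟨mul_nonneg (abs_nonneg c) (sInf_mem_lipSet f).1, fun x y => ?_⟩
    have hf := (sInf_mem_lipSet f).2 x y
    calc |(c • f) x - (c • f) y| = |c| * |f x - f y| := by
          rw [coe_smul]; rw [← abs_mul]; ring_nf
      _ ≤ |c| * (sInf (lipSet f) * dist x y) :=
          mul_le_mul_of_nonneg_left hf (abs_nonneg c)
      _ = |c| * sInf (lipSet f) * dist x y := by ring

lemma norm_apply_le (f : Lip0 M base) (x y : M) : |f x - f y| ≤ ‖f‖ * dist x y :=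
  (sInf_mem_lipSet f).2 x y

end Lip0

open Lip0 NormedSpace

variable (M : Type*) [MetricSpace M]

/-- The Dirac evaluation functional at `x`. -/
def deltaF (base x : M) : StrongDual ℝ (Lip0 M base) :=
  LinearMap.mkContinuous
    { toFun := fun f => f x
      map_add' := fun _ _ => rfl
      map_smul' := fun _ _ => rfl }
    (dist x base)
    (fun f => by
      have h := Lip0.norm_apply_le f x base
      simp only [Lip0.map_base, sub_zero] at h
      show ‖f x‖ ≤ _; simpa [Real.norm_eq_abs, mul_comm] using h)

variable {M}

@[simp] lemma deltaF_apply (base x : M) (f : Lip0 M base) : deltaF M base x f = f x := rfl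

/-- The molecule `(δ x - δ y)/d(x,y)`. -/
def molecule (base x y : M) : StrongDual ℝ (Lip0 M base) :=
  (dist x y)⁻¹ • (deltaF M base x - deltaF M base y)

variable (M) in
/-- The Lipschitz-free space over `M`, realized as the closed linear span of the Dirac
evaluations inside the dual of `Lip0 M base`. -/
def FreeSpace (base : M) : Submodule ℝ (StrongDual ℝ (Lip0 M base)) :=
  (Submodule.span ℝ (Set.range (deltaF M base))).topologicalClosure

variable (M) in
/-- The subspace of the free space generated by the Diracs of a subset `S ⊆ M`. -/
def FreeSpaceOn (base : M) (S : Set M) : Submodule ℝ (StrongDual ℝ (Lip0 M base)) :=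
  (Submodule.span ℝ (deltaF M base '' S)).topologicalClosure

lemma deltaF_mem (base x : M) : deltaF M base x ∈ FreeSpace M base :=
  Submodule.le_topologicalClosure _ (Submodule.subset_span ⟨x, rfl⟩)

lemma molecule_mem (base x y : M) : molecule base x y ∈ FreeSpace M base :=
  Submodule.smul_mem _ _ (Submodule.sub_mem _ (deltaF_mem base x) (deltaF_mem base y))

/-- The molecule as an element of the free space. -/
def mol (base x y : M) : ↥(FreeSpace M base) := ⟨molecule base x y, molecule_mem base x y⟩

/-- The "magic function" of Ivakhno, Kadets and Werner associated to the pair `(p, q)`,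
with base point `o`. -/
def magicFun (o p q : M) (t : M) : ℝ :=
  (dist p q / 2) *
    ((dist t q - dist t p) / (dist t q + dist t p) -
      (dist o q - dist o p) / (dist o q + dist o p))

/-!
The magic function `g` has slope `1` only along the pair `(p, q)`: with the excess
`e(x) = d(x,p) + d(x,q) - d(p,q)`, one has `|g x - g y| ≤ d(p,q) / (d(p,q) + e(x)) * d(x,y)`.
So if `μ` in the unit ball of `F(M)` satisfies `⟨μ, g⟩ = 1`, then `g ± t h` still has norm `≤ 1`
for small `t` whenever `h` vanishes near `{e = 0}`, whence `⟨μ, h⟩ = 0`. Since `μ` is a norm limit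
of finitely supported functionals, a nonzero value `⟨μ, w⟩` can be localised, by cut-offs, to
bounded Lipschitz functions supported in arbitrarily small balls inside `{e ≤ σ}`. Iterating gives
nested closed sets whose intersection, by completeness, contains a point of zero excess, which
the segment hypothesis forces to be `p` or `q`. Hence `μ` kills every function supported away
from `{p, q}`, and, approximating once more, every function vanishing at `p` and `q`. Then `μ`
only sees the values at `p` and `q`, and the two test functions `d(o,p) - d(·,p)` and
`d(·,q) - d(o,q)` pin it down to the molecule `m_{pq}`.
-/

open Filter Topology

def cutoff (r t : ℝ) : ℝ := min (max (2 - 2 * t / r) 0) 1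

section Cutoff

variable {r : ℝ}

lemma cutoff_nonneg (r t : ℝ) : 0 ≤ cutoff r t := le_min (le_max_right _ _) zero_le_one

lemma cutoff_le_one (r t : ℝ) : cutoff r t ≤ 1 := min_le_right _ _

lemma cutoff_of_le_half (hr : 0 < r) {t : ℝ} (ht : t ≤ r / 2) : cutoff r t = 1 := by
  have : 1 ≤ 2 - 2 * t / r := by rw [le_sub_comm, div_le_iff₀ hr]; linarith
  exact min_eq_right (le_max_of_le_left this)

lemma cutoff_of_le (hr : 0 < r) {t : ℝ} (ht : r ≤ t) : cutoff r t = 0 := by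
  have : 2 - 2 * t / r ≤ 0 := by rw [sub_nonpos, le_div_iff₀ hr]; linarith
  rw [cutoff, max_eq_right this, min_eq_left zero_le_one]

lemma lt_of_cutoff_ne_zero (hr : 0 < r) {t : ℝ} (h : cutoff r t ≠ 0) : t < r :=
  not_le.1 fun ht => h (cutoff_of_le hr ht)

lemma abs_cutoff_sub_cutoff_le (hr : 0 < r) (t t' : ℝ) :
    |cutoff r t - cutoff r t'| ≤ 2 / r * |t - t'| := by
  calc |cutoff r t - cutoff r t'| ≤ |(2 - 2 * t / r) - (2 - 2 * t' / r)| :=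
        (abs_min_sub_min_le_max _ _ _ _).trans <| by
          simpa using abs_max_sub_max_le_abs (2 - 2 * t / r) (2 - 2 * t' / r) 0
    _ = 2 / r * |t - t'| := by
        rw [show (2 - 2 * t / r) - (2 - 2 * t' / r) = -(2 / r * (t - t')) by ring, abs_neg,
          abs_mul, abs_of_pos (by positivity : 0 < 2 / r)]

lemma abs_mul_cutoff_le (a r t : ℝ) : |a * cutoff r t| ≤ |a| := by
  rw [abs_mul, abs_of_nonneg (cutoff_nonneg r t)]
  exact mul_le_of_le_one_right (abs_nonneg a) (cutoff_le_one r t)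

lemma abs_sub_mul_cutoff_le (a r t : ℝ) : |a - a * cutoff r t| ≤ |a| := by
  rw [← mul_one_sub, abs_mul, abs_of_nonneg (sub_nonneg.2 (cutoff_le_one r t))]
  exact mul_le_of_le_one_right (abs_nonneg a) (by linarith [cutoff_nonneg r t])

lemma ne_zero_and_lt_of_mul_cutoff_ne_zero (hr : 0 < r) {a t : ℝ} (h : a * cutoff r t ≠ 0) :
    a ≠ 0 ∧ t < r :=
  ⟨left_ne_zero_of_mul h, lt_of_cutoff_ne_zero hr (right_ne_zero_of_mul h)⟩

lemma ne_zero_and_lt_of_sub_mul_cutoff_ne_zero (hr : 0 < r) {a t : ℝ}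
    (h : a - a * cutoff r t ≠ 0) : a ≠ 0 ∧ r / 2 < t := by
  refine ⟨fun ha => h (by simp [ha]), not_le.1 fun ht => h ?_⟩
  rw [cutoff_of_le_half hr ht, mul_one, sub_self]

end Cutoff

lemma abs_mul_sub_mul_le {f u : M → ℝ} {C Lf Lu : ℝ} (hC : 0 ≤ C) (hLf : 0 ≤ Lf) (hLu : 0 ≤ Lu)
    (hfC : ∀ z, u z ≠ 0 → |f z| ≤ C) (hu : ∀ z, |u z| ≤ 1)
    (hf : ∀ x y, |f x - f y| ≤ Lf * dist x y) (hu' : ∀ x y, |u x - u y| ≤ Lu * dist x y)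
    (x y : M) : |f x * u x - f y * u y| ≤ (C * Lu + Lf) * dist x y := by
  have key : ∀ x y, u x ≠ 0 → |f x * u x - f y * u y| ≤ (C * Lu + Lf) * dist x y := by
    intro x y hx
    calc |f x * u x - f y * u y| = |f x * (u x - u y) + u y * (f x - f y)| := by ring_nf
      _ ≤ |f x| * |u x - u y| + |u y| * |f x - f y| := by
          rw [← abs_mul, ← abs_mul]; exact abs_add_le _ _
      _ ≤ C * (Lu * dist x y) + 1 * (Lf * dist x y) := by
          gcongr
          exacts [hfC x hx, hu' x y, hu y, hf x y]
      _ = (C * Lu + Lf) * dist x y := by ring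
  by_cases hx : u x = 0
  · by_cases hy : u y = 0
    · simp only [hx, hy, mul_zero, sub_self, abs_zero]; positivity
    · rw [abs_sub_comm, dist_comm]; exact key y x hy
  · exact key x y hx

lemma abs_infDist_sub_infDist_le (S : Set M) (x y : M) :
    |infDist x S - infDist y S| ≤ 1 * dist x y := by
  simpa [Real.dist_eq] using (lipschitz_infDist_pt S).dist_le_mul x y

namespace Lip0

variable {o : M}

@[simp] lemma sub_apply (f g : Lip0 M o) (t : M) : (f - g) t = f t - g t := by simp

lemma norm_le_of_forall {f : Lip0 M o} {K : ℝ} (hK : 0 ≤ K)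
    (h : ∀ x y, |f x - f y| ≤ K * dist x y) : ‖f‖ ≤ K :=
  csInf_le (lipSet_bddBelow f) ⟨hK, h⟩

lemma abs_apply_le (f : Lip0 M o) (z : M) : |f z| ≤ ‖f‖ * dist z o := by
  simpa using f.norm_apply_le z o

lemma abs_apply_le_mul_infDist {f : Lip0 M o} {S : Set M} (hS : S.Nonempty)
    (hf : ∀ x ∈ S, f x = 0) (z : M) : |f z| ≤ ‖f‖ * infDist z S := by
  rcases (norm_nonneg f).eq_or_lt with h0 | hpos
  · have : f = 0 := norm_eq_zero.1 h0.symm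
    simp [this]
  · rw [← div_le_iff₀' hpos, le_infDist hS]
    intro x hx
    rw [div_le_iff₀' hpos]
    simpa [hf x hx] using f.norm_apply_le z x

def ofLipschitzWith {K : NNReal} (f : M → ℝ) (hf : LipschitzWith K f) : Lip0 M o :=
  ⟨fun t => f t - f o, ⟨K, by simpa using hf.sub (LipschitzWith.const (f o))⟩, sub_self _⟩

@[simp] lemma ofLipschitzWith_apply {K : NNReal} (f : M → ℝ) (hf : LipschitzWith K f) (t : M) :
    (ofLipschitzWith (o := o) f hf) t = f t - f o := rfl

lemma norm_ofLipschitzWith_le {K : NNReal} (f : M → ℝ) (hf : LipschitzWith K f) :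
    ‖ofLipschitzWith (o := o) f hf‖ ≤ K :=
  norm_le_of_forall K.coe_nonneg fun x y => by
    simpa [Real.dist_eq] using hf.dist_le_mul x y

lemma exists_mul_cutoff (w : Lip0 M o) {φ : M → ℝ} {K r C : ℝ} (hK : 0 ≤ K)
    (hφ : ∀ x y, |φ x - φ y| ≤ K * dist x y) (hr : 0 < r) (hC : 0 ≤ C)
    (hwC : ∀ z, φ z < r → |w z| ≤ C) :
    ∃ w' : Lip0 M o, (∀ z, w' z = w z * cutoff r (φ z)) ∧ ‖w'‖ ≤ C * (2 / r * K) + ‖w‖ := by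
  have hbound : ∀ x y, |w x * cutoff r (φ x) - w y * cutoff r (φ y)| ≤
      (C * (2 / r * K) + ‖w‖) * dist x y :=
    abs_mul_sub_mul_le hC (norm_nonneg w) (by positivity)
      (fun z hz => hwC z (lt_of_cutoff_ne_zero hr hz))
      (fun z => by rw [abs_of_nonneg (cutoff_nonneg _ _)]; exact cutoff_le_one _ _)
      w.norm_apply_le fun x y => (abs_cutoff_sub_cutoff_le hr _ _).trans <| by
        rw [mul_assoc]; gcongr; exact hφ x y
  refine ⟨⟨fun z => w z * cutoff r (φ z),
    ⟨_, LipschitzWith.of_dist_le' (by simpa [Real.dist_eq] using hbound)⟩, by simp⟩,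
    fun _ => rfl, norm_le_of_forall (by positivity) hbound⟩

end Lip0

lemma apply_le_one_of_norm_le_one {E : Type*} [SeminormedAddCommGroup E] [NormedSpace ℝ E]
    {μ : StrongDual ℝ E} (hμ : ‖μ‖ ≤ 1) {x : E} (hx : ‖x‖ ≤ 1) : μ x ≤ 1 :=
  (Real.le_norm_self _).trans (by simpa using μ.le_of_opNorm_le_of_le hμ hx)

lemma apply_eq_zero_of_norm_add_le_of_norm_sub_le {E : Type*} [SeminormedAddCommGroup E]
    [NormedSpace ℝ E] {μ : StrongDual ℝ E} (hμ : ‖μ‖ ≤ 1) {g h : E} (hμg : μ g = 1)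
    (hadd : ‖g + h‖ ≤ 1) (hsub : ‖g - h‖ ≤ 1) : μ h = 0 := by
  have h₁ := apply_le_one_of_norm_le_one hμ hadd
  have h₂ := apply_le_one_of_norm_le_one hμ hsub
  rw [map_add, hμg] at h₁
  rw [map_sub, hμg] at h₂
  linarith

section FreeSpace

variable {o : M} {μ : StrongDual ℝ (Lip0 M o)}

lemma FreeSpace.exists_finset_approx (hμ : μ ∈ FreeSpace M o) {ε : ℝ} (hε : 0 < ε) :
    ∃ (s : Finset M) (c : M → ℝ), ∀ h : Lip0 M o, |μ h - ∑ z ∈ s, c z * h z| ≤ ε * ‖h‖ := by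
  obtain ⟨ν, hν, hμν⟩ := Metric.mem_closure_iff.1 hμ ε hε
  obtain ⟨c, rfl⟩ := Finsupp.mem_span_range_iff_exists_finsupp.1 hν
  refine ⟨c.support, c, fun h => ?_⟩
  have hνh : (c.sum fun z a => a • deltaF M o z) h = ∑ z ∈ c.support, c z * h z := by
    simp [Finsupp.sum]
  simpa [← hνh] using (μ - _).le_of_opNorm_le (by rw [← dist_eq_norm]; exact hμν.le) h

def Charges (μ : StrongDual ℝ (Lip0 M o)) (A : Set M) : Prop :=
  ∃ w : Lip0 M o, Function.support w ⊆ A ∧ (∃ C, ∀ z, |w z| ≤ C) ∧ μ w ≠ 0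

lemma Charges.nonempty {A : Set M} (h : Charges μ A) : A.Nonempty := by
  obtain ⟨w, hw, -, hμw⟩ := h
  obtain ⟨z, hz⟩ : ∃ z, w z ≠ 0 := by
    by_contra! h0
    exact hμw (by rw [show w = 0 from DFunLike.ext _ _ h0, map_zero])
  exact ⟨z, hw hz⟩

lemma Charges.inter_union_closedBall {A B : Set M} {a : M} {σ : ℝ} (hσ : 0 < σ)
    (h : Charges μ (A ∩ (B ∪ closedBall a σ))) :
    Charges μ (A ∩ B) ∨ Charges μ (A ∩ closedBall a (2 * σ)) := by
  obtain ⟨w, hw, ⟨C, hC⟩, hμw⟩ := h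
  have h2σ : 0 < 2 * σ := by positivity
  obtain ⟨w', hw', -⟩ := w.exists_mul_cutoff (φ := fun z => dist z a) zero_le_one
    (fun x y => by simpa using abs_dist_sub_le x y a) h2σ ((abs_nonneg _).trans (hC o))
    fun z _ => hC z
  by_cases hμw' : μ w' = 0
  · refine .inl ⟨w - w', fun z hz => ?_, ⟨C, fun z => ?_⟩, by simpa [hμw'] using hμw⟩
    · rw [Function.mem_support, Lip0.sub_apply, hw'] at hz
      obtain ⟨hwz, hza⟩ := ne_zero_and_lt_of_sub_mul_cutoff_ne_zero h2σ hz
      obtain ⟨hzA, hzB | hzball⟩ := hw hwz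
      · exact ⟨hzA, hzB⟩
      · exact absurd (mem_closedBall.1 hzball) (by linarith)
    · rw [Lip0.sub_apply, hw']; exact (abs_sub_mul_cutoff_le _ _ _).trans (hC z)
  · refine .inr ⟨w', fun z hz => ?_, ⟨C, fun z => ?_⟩, hμw'⟩
    · rw [Function.mem_support, hw'] at hz
      obtain ⟨hwz, hza⟩ := ne_zero_and_lt_of_mul_cutoff_ne_zero h2σ hz
      exact ⟨(hw hwz).1, mem_closedBall.2 hza.le⟩
    · rw [hw']; exact (abs_mul_cutoff_le _ _ _).trans (hC z)

lemma Charges.exists_mem_of_biUnion {A : Set M} {σ : ℝ} (hσ : 0 < σ) (s : Finset M)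
    (h : Charges μ (A ∩ ⋃ x ∈ s, closedBall x σ)) :
    ∃ x ∈ s, Charges μ (A ∩ closedBall x (2 * σ)) := by
  classical
  induction s using Finset.induction_on with
  | empty => simpa using h.nonempty
  | insert a s _ ih =>
    rw [Finset.set_biUnion_insert, union_comm] at h
    rcases h.inter_union_closedBall hσ with h | h
    · obtain ⟨x, hx, hx'⟩ := ih h
      exact ⟨x, Finset.mem_insert_of_mem hx, hx'⟩
    · exact ⟨a, Finset.mem_insert_self a s, h⟩

lemma FreeSpace.exists_finset_charges_inter_biUnion (hμ : μ ∈ FreeSpace M o) {A : Set M}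
    (hA : Charges μ A) {σ : ℝ} (hσ : 0 < σ) :
    ∃ t : Finset M, Charges μ (A ∩ ⋃ x ∈ t, closedBall x σ) := by
  classical
  obtain ⟨w, hw, ⟨C, hC⟩, hμw⟩ := hA
  set K := C * (2 / σ * 1) + ‖w‖
  have hK : 0 ≤ K := by have := (abs_nonneg _).trans (hC o); positivity
  obtain ⟨s, c, hν⟩ := FreeSpace.exists_finset_approx hμ
    (by positivity : 0 < |μ w| / (2 * (‖w‖ + K + 1)))
  -- `infDist` to `∅` is `0`, hence the extra point `o`
  set t : Finset M := insert o s
  have ht : (t : Set M).Nonempty := ⟨o, by simp [t]⟩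
  obtain ⟨w', hw', hw'K⟩ := w.exists_mul_cutoff (φ := fun z => infDist z (t : Set M))
    zero_le_one (abs_infDist_sub_infDist_le _) hσ ((abs_nonneg _).trans (hC o)) fun z _ => hC z
  have hfar : ∑ z ∈ s, c z * (w - w') z = 0 := Finset.sum_eq_zero fun z hz => by
    rw [Lip0.sub_apply, hw', infDist_zero_of_mem (by simp [t, hz]),
      cutoff_of_le_half hσ (by positivity)]
    ring
  have hsmall : |μ (w - w')| < |μ w| := by
    have hnorm : ‖w - w'‖ ≤ ‖w‖ + K := (norm_sub_le _ _).trans (by linarith)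
    calc |μ (w - w')| ≤ |μ w| / (2 * (‖w‖ + K + 1)) * ‖w - w'‖ := by
          simpa only [hfar, sub_zero] using hν (w - w')
      _ ≤ |μ w| / (2 * (‖w‖ + K + 1)) * (‖w‖ + K) := by gcongr
      _ < |μ w| := by
          rw [div_mul_eq_mul_div, div_lt_iff₀ (by positivity)]
          nlinarith [abs_pos.2 hμw, norm_nonneg w]
  refine ⟨t, w', fun z hz => ?_, ⟨C, fun z => ?_⟩, fun h0 => by simp [h0] at hsmall⟩
  · rw [Function.mem_support, hw'] at hz
    obtain ⟨hwz, hzt⟩ := ne_zero_and_lt_of_mul_cutoff_ne_zero hσ hz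
    obtain ⟨x, hx, hzx⟩ := (infDist_lt_iff ht).1 hzt
    exact ⟨hw hwz, mem_iUnion₂.2 ⟨x, hx, mem_closedBall.2 hzx.le⟩⟩
  · rw [hw']; exact (abs_mul_cutoff_le _ _ _).trans (hC z)

lemma FreeSpace.exists_charges_inter_closedBall (hμ : μ ∈ FreeSpace M o) {A : Set M}
    (hA : Charges μ A) {σ : ℝ} (hσ : 0 < σ) : ∃ x, Charges μ (A ∩ closedBall x σ) := by
  obtain ⟨t, ht⟩ := FreeSpace.exists_finset_charges_inter_biUnion hμ hA (half_pos hσ)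
  obtain ⟨x, -, hx⟩ := ht.exists_mem_of_biUnion (half_pos hσ) t
  exact ⟨x, by rwa [mul_div_cancel₀ σ two_ne_zero] at hx⟩

lemma FreeSpace.apply_eq_zero_of_eqOn_zero (hμ : μ ∈ FreeSpace M o) {S : Set M}
    (hS : S.Nonempty)
    (hfar : ∀ (w : Lip0 M o) (r : ℝ), 0 < r → Function.support w ⊆ {z | r ≤ infDist z S} →
      μ w = 0)
    {f : Lip0 M o} (hf : ∀ x ∈ S, f x = 0) : μ f = 0 := by
  have hfS := Lip0.abs_apply_le_mul_infDist hS hf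
  refine abs_nonpos_iff.1 (le_of_forall_pos_le_add fun ε hε => ?_)
  obtain ⟨s, c, hν⟩ := FreeSpace.exists_finset_approx hμ (by positivity : 0 < ε / (3 * ‖f‖ + 1))
  have hev : ∀ᶠ r in 𝓝[>] (0 : ℝ), ∀ z ∈ s, infDist z S = 0 ∨ r ≤ infDist z S := by
    refine (Filter.eventually_all_finset s).2 fun z _ => ?_
    rcases (infDist_nonneg (x := z) (s := S)).eq_or_lt with h0 | hpos
    · exact Filter.Eventually.of_forall fun _ => .inl h0.symm
    · exact (eventually_nhdsWithin_of_eventually_nhds (eventually_lt_nhds hpos)).mono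
        fun r hr => .inr hr.le
  obtain ⟨r, hrs, hr⟩ := (hev.and self_mem_nhdsWithin).exists
  obtain ⟨w', hw', hw'n⟩ := f.exists_mul_cutoff (φ := fun z => infDist z S) zero_le_one
    (abs_infDist_sub_infDist_le S)
    hr (by positivity : 0 ≤ ‖f‖ * r) fun z hz => (hfS z).trans (by gcongr)
  have hμf : μ f = μ w' := by
    have : μ (f - w') = 0 := hfar _ (r / 2) (half_pos hr) fun z hz => by
      rw [Function.mem_support, Lip0.sub_apply, hw'] at hz
      exact (ne_zero_and_lt_of_sub_mul_cutoff_ne_zero hr hz).2.le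
    rwa [map_sub, sub_eq_zero] at this
  have hνw' : ∑ z ∈ s, c z * w' z = 0 := Finset.sum_eq_zero fun z hz => by
    rcases hrs z hz with h0 | hle
    · rw [hw', show f z = 0 by simpa [h0] using hfS z]; ring
    · rw [hw', cutoff_of_le hr hle]; ring
  have hw'n' : ‖w'‖ ≤ 3 * ‖f‖ := by
    rw [show 3 * ‖f‖ = ‖f‖ * r * (2 / r * 1) + ‖f‖ by field_simp; ring]; exact hw'n
  calc |μ f| ≤ ε / (3 * ‖f‖ + 1) * ‖w'‖ := by simpa [hμf, hνw'] using hν w'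
    _ ≤ ε / (3 * ‖f‖ + 1) * (3 * ‖f‖ + 1) := by gcongr; linarith
    _ = 0 + ε := by field_simp; ring

lemma mul_apply_eq_mul_apply_of_ker {p q : M}
    (hker : ∀ f : Lip0 M o, f p = 0 → f q = 0 → μ f = 0) {F G : Lip0 M o} (hF : F p = F q)
    (hG : G p = G q) : G p * μ F = F p * μ G := by
  have := hker (G p • F - F p • G) (by simp; ring) (by simp [hF, hG]; ring)
  rwa [map_sub, map_smul, map_smul, smul_eq_mul, smul_eq_mul, sub_eq_zero] at this

end FreeSpace

section Magic

variable {o p q : M}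

def excess (p q z : M) : ℝ := dist z p + dist z q - dist p q

lemma excess_nonneg (p q z : M) : 0 ≤ excess p q z := by
  have := dist_triangle_left p q z
  unfold excess; linarith

lemma abs_excess_sub_excess_le (p q x y : M) :
    |excess p q x - excess p q y| ≤ 2 * dist x y := by
  have hp := abs_dist_sub_le x y p
  have hq := abs_dist_sub_le x y q
  calc |excess p q x - excess p q y| = |(dist x p - dist y p) + (dist x q - dist y q)| := by
        unfold excess; ring_nf
    _ ≤ 2 * dist x y := (abs_add_le _ _).trans (by linarith)

lemma continuous_excess (p q : M) : Continuous (excess p q) := by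
  unfold excess; fun_prop

lemma eq_or_eq_of_excess_eq_zero (hseg : {z : M | dist p q = dist z p + dist z q} = {p, q})
    {z : M} (hz : excess p q z = 0) : z = p ∨ z = q := by
  have : z ∈ {z : M | dist p q = dist z p + dist z q} := by
    unfold excess at hz; show _ = _; linarith
  simpa [hseg] using this

lemma dist_add_dist_pos (hpq : p ≠ q) (z : M) : 0 < dist z p + dist z q :=
  (dist_pos.2 hpq).trans_le (dist_triangle_left p q z)

lemma magicFun_sub_magicFun (hpq : p ≠ q) (x y : M) :
    magicFun o p q x - magicFun o p q y =
      dist p q * (dist x q * dist y p - dist x p * dist y q) /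
        ((dist x p + dist x q) * (dist y p + dist y q)) := by
  have hD : ∀ z : M, 0 < dist z q + dist z p := fun z => by
    linarith [dist_add_dist_pos hpq z]
  have := (hD x).ne'; have := (hD y).ne'; have := (hD o).ne'
  have := (dist_add_dist_pos hpq x).ne'; have := (dist_add_dist_pos hpq y).ne'
  unfold magicFun
  field_simp
  ring

lemma dist_mul_dist_sub_le (p q x y : M) :
    dist x q * dist y p - dist x p * dist y q ≤ dist x y * (dist y p + dist y q) := by
  have h₁ : 0 ≤ dist y p * (dist x y + dist y q - dist x q) :=
    mul_nonneg dist_nonneg (by linarith [dist_triangle x y q])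
  have h₂ : 0 ≤ dist y q * (dist x y + dist x p - dist y p) :=
    mul_nonneg dist_nonneg (by linarith [dist_triangle_left y p x])
  nlinarith

lemma abs_magicFun_sub_magicFun_le (hpq : p ≠ q) (x y : M) :
    |magicFun o p q x - magicFun o p q y| ≤ dist p q / (dist x p + dist x q) * dist x y := by
  have hd := dist_pos.2 hpq
  have hD := dist_add_dist_pos hpq
  rw [magicFun_sub_magicFun hpq, abs_div, abs_mul, abs_of_pos hd,
    abs_of_pos (mul_pos (hD x) (hD y)), div_le_iff₀ (mul_pos (hD x) (hD y))]
  have hN : |dist x q * dist y p - dist x p * dist y q| ≤ dist x y * (dist y p + dist y q) := by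
    refine abs_le.2 ⟨?_, dist_mul_dist_sub_le p q x y⟩
    linarith [dist_mul_dist_sub_le q p x y]
  calc dist p q * |dist x q * dist y p - dist x p * dist y q|
      ≤ dist p q * (dist x y * (dist y p + dist y q)) := by gcongr
    _ = dist p q / (dist x p + dist x q) * dist x y *
          ((dist x p + dist x q) * (dist y p + dist y q)) := by
        field_simp [(hD x).ne']

lemma abs_magicFun_sub_magicFun_le_dist (hpq : p ≠ q) (x y : M) :
    |magicFun o p q x - magicFun o p q y| ≤ dist x y := by
  refine (abs_magicFun_sub_magicFun_le hpq x y).trans (mul_le_of_le_one_left dist_nonneg ?_)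
  exact (div_le_one (dist_add_dist_pos hpq x)).2 (dist_triangle_left p q x)

lemma abs_magicFun_sub_magicFun_le_of_le_excess (hpq : p ≠ q) {δ : ℝ} (hδ : 0 ≤ δ) {x : M}
    (hx : δ ≤ excess p q x) (y : M) :
    |magicFun o p q x - magicFun o p q y| ≤ dist p q / (dist p q + δ) * dist x y := by
  have hd := dist_pos.2 hpq
  refine (abs_magicFun_sub_magicFun_le hpq x y).trans ?_
  gcongr ?_ * _
  exact div_le_div_of_nonneg_left hd.le (by positivity) (by unfold excess at hx; linarith)

lemma magicFun_sub_magicFun_self (hpq : p ≠ q) :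
    magicFun o p q p - magicFun o p q q = dist p q := by
  have hd := (dist_pos.2 hpq).ne'
  rw [magicFun_sub_magicFun hpq, dist_comm q p]
  field_simp
  simp [sq]

lemma magicFun_left (hpq : p ≠ q) :
    magicFun o p q p = dist p q * dist o p / (dist o p + dist o q) := by
  have := (dist_add_dist_pos hpq o).ne'
  have : dist o q + dist o p ≠ 0 := by linarith [dist_add_dist_pos hpq o]
  unfold magicFun
  rw [dist_self, sub_zero, add_zero, div_self (dist_pos.2 hpq).ne']
  field_simp
  ring

lemma magicFun_left_mem_Ioo (hpq : p ≠ q) (ho : 0 < excess p q o) :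
    magicFun o p q p ∈ Ioo (dist p q - dist o q) (dist o p) := by
  have hS := dist_add_dist_pos hpq o
  have hop : 0 < dist o p := dist_pos.2 fun h => by simp [excess, h] at ho
  have hoq : 0 < dist o q := dist_pos.2 fun h => by simp [excess, h, dist_comm] at ho
  have hop' := mul_pos hop ho
  have hoq' := mul_pos hoq ho
  unfold excess at hop' hoq'
  rw [magicFun_left hpq, mem_Ioo, lt_div_iff₀ hS, div_lt_iff₀ hS]
  constructor <;> nlinarith

end Magic

section Exposed

variable {o p q : M} {g : Lip0 M o} {μ : StrongDual ℝ (Lip0 M o)}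

lemma molecule_apply (h : Lip0 M o) : molecule o p q h = (dist p q)⁻¹ * (h p - h q) := rfl

lemma norm_eq_one_of_magicFun (hpq : p ≠ q) (hg : ∀ t, g t = magicFun o p q t) : ‖g‖ = 1 := by
  refine le_antisymm (Lip0.norm_le_of_forall zero_le_one fun x y => ?_) ?_
  · simpa [hg] using abs_magicFun_sub_magicFun_le_dist hpq x y
  · have h := g.norm_apply_le p q
    rw [hg, hg, magicFun_sub_magicFun_self hpq, abs_of_pos (dist_pos.2 hpq)] at h
    exact (le_mul_iff_one_le_left (dist_pos.2 hpq)).1 h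

lemma molecule_apply_eq_one (hpq : p ≠ q) (hg : ∀ t, g t = magicFun o p q t) :
    molecule o p q g = 1 := by
  rw [molecule_apply, hg, hg, magicFun_sub_magicFun_self hpq, inv_mul_cancel₀ (dist_pos.2 hpq).ne']

lemma apply_right_eq_of_magicFun (hpq : p ≠ q) (hg : ∀ t, g t = magicFun o p q t) :
    g q = g p - dist p q := by
  rw [hg, hg]; linarith [magicFun_sub_magicFun_self (o := o) hpq]

lemma norm_add_smul_le_one (hpq : p ≠ q) (hg : ∀ t, g t = magicFun o p q t) {δ : ℝ}
    (hδ : 0 < δ) {h : Lip0 M o} (hh : ∀ z, excess p q z < δ → h z = 0) {s : ℝ}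
    (hs : |s| * ‖h‖ ≤ δ / (dist p q + δ)) : ‖g + s • h‖ ≤ 1 := by
  have happly : ∀ x, (g + s • h) x = magicFun o p q x + s * h x := fun x => by simp [hg]
  have hfar : ∀ x y, δ ≤ excess p q x → |(g + s • h) x - (g + s • h) y| ≤ 1 * dist x y := by
    intro x y hx
    calc |(g + s • h) x - (g + s • h) y|
        = |(magicFun o p q x - magicFun o p q y) + s * (h x - h y)| := by
          rw [happly, happly]; ring_nf
      _ ≤ dist p q / (dist p q + δ) * dist x y + |s| * (‖h‖ * dist x y) := by
          refine (abs_add_le _ _).trans ?_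
          rw [abs_mul]
          gcongr
          exacts [abs_magicFun_sub_magicFun_le_of_le_excess hpq hδ.le hx y, h.norm_apply_le x y]
      _ ≤ dist p q / (dist p q + δ) * dist x y + δ / (dist p q + δ) * dist x y := by
          rw [← mul_assoc]; gcongr
      _ = 1 * dist x y := by field_simp
  refine Lip0.norm_le_of_forall zero_le_one fun x y => ?_
  by_cases hx : δ ≤ excess p q x
  · exact hfar x y hx
  by_cases hy : δ ≤ excess p q y
  · rw [abs_sub_comm, dist_comm]; exact hfar y x hy
  rw [happly, happly, hh x (not_le.1 hx), hh y (not_le.1 hy), one_mul]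
  simpa using abs_magicFun_sub_magicFun_le_dist hpq x y

lemma apply_eq_zero_of_forall_excess_lt (hpq : p ≠ q) (hg : ∀ t, g t = magicFun o p q t)
    (hμ : ‖μ‖ ≤ 1) (hμg : μ g = 1) {δ : ℝ} (hδ : 0 < δ) {h : Lip0 M o}
    (hh : ∀ z, excess p q z < δ → h z = 0) : μ h = 0 := by
  set t := δ / (dist p q + δ) / (‖h‖ + 1)
  have ht : 0 < t := by have := dist_nonneg (x := p) (y := q); positivity
  have hts : |t| * ‖h‖ ≤ δ / (dist p q + δ) := by
    rw [abs_of_pos ht]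
    calc t * ‖h‖ ≤ t * (‖h‖ + 1) := by gcongr; linarith
      _ = δ / (dist p q + δ) := div_mul_cancel₀ _ (by positivity)
  have hμth := apply_eq_zero_of_norm_add_le_of_norm_sub_le hμ hμg
    (norm_add_smul_le_one hpq hg hδ hh hts)
    (by rw [sub_eq_add_neg, ← neg_smul]; exact norm_add_smul_le_one hpq hg hδ hh (by rwa [abs_neg]))
  rwa [map_smul, smul_eq_mul, mul_eq_zero, or_iff_right ht.ne'] at hμth

lemma charges_inter_excess_le (hpq : p ≠ q) (hg : ∀ t, g t = magicFun o p q t)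
    (hμ : ‖μ‖ ≤ 1) (hμg : μ g = 1) {A : Set M} {w : Lip0 M o} (hw : Function.support w ⊆ A)
    (hμw : μ w ≠ 0) {σ : ℝ} (hσ : 0 < σ) : Charges μ (A ∩ {z | excess p q z ≤ σ}) := by
  set C := ‖w‖ * (dist p q + σ + dist p o)
  have hC : 0 ≤ C := by positivity
  have hwC : ∀ z, excess p q z < σ → |w z| ≤ C := fun z hz => by
    refine (w.abs_apply_le z).trans (mul_le_mul_of_nonneg_left ?_ (norm_nonneg w))
    have := dist_triangle z p o
    unfold excess at hz
    linarith [dist_nonneg (x := z) (y := q)]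
  obtain ⟨w', hw', -⟩ := w.exists_mul_cutoff (φ := excess p q) zero_le_two
    (abs_excess_sub_excess_le p q) hσ hC hwC
  have hμw' : μ w' = μ w := by
    have : μ (w - w') = 0 := apply_eq_zero_of_forall_excess_lt hpq hg hμ hμg (half_pos hσ)
      fun z hz => by rw [Lip0.sub_apply, hw', cutoff_of_le_half hσ hz.le, mul_one, sub_self]
    rwa [map_sub, sub_eq_zero, eq_comm] at this
  refine ⟨w', fun z hz => ?_, ⟨C, fun z => ?_⟩, hμw'.symm ▸ hμw⟩
  · rw [Function.mem_support, hw'] at hz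
    obtain ⟨hwz, hzσ⟩ := ne_zero_and_lt_of_mul_cutoff_ne_zero hσ hz
    exact ⟨hw hwz, hzσ.le⟩
  · rw [hw']
    by_cases hz : w z * cutoff σ (excess p q z) = 0
    · rw [hz, abs_zero]; exact hC
    · exact (abs_mul_cutoff_le _ _ _).trans
        (hwC z (ne_zero_and_lt_of_mul_cutoff_ne_zero hσ hz).2)

lemma Charges.exists_inter_excess_le_inter_closedBall (hpq : p ≠ q)
    (hg : ∀ t, g t = magicFun o p q t) (hμF : μ ∈ FreeSpace M o) (hμ : ‖μ‖ ≤ 1) (hμg : μ g = 1)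
    {A : Set M} (hA : Charges μ A) {σ : ℝ} (hσ : 0 < σ) :
    ∃ x, Charges μ (A ∩ {z | excess p q z ≤ σ} ∩ closedBall x σ) :=
  let ⟨_, hw, _, hμw⟩ := hA
  FreeSpace.exists_charges_inter_closedBall hμF
    (charges_inter_excess_le hpq hg hμ hμg hw hμw hσ) hσ

lemma apply_eq_zero_of_le_infDist [CompleteSpace M] (hpq : p ≠ q)
    (hseg : {z : M | dist p q = dist z p + dist z q} = {p, q})
    (hg : ∀ t, g t = magicFun o p q t) (hμF : μ ∈ FreeSpace M o) (hμ : ‖μ‖ ≤ 1) (hμg : μ g = 1)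
    {w : Lip0 M o} {r : ℝ} (hr : 0 < r) (hw : Function.support w ⊆ {z | r ≤ infDist z {p, q}}) :
    μ w = 0 := by
  by_contra hμw
  -- Nested closed charged sets of vanishing diameter and excess; by Cantor's intersection
  -- theorem they meet in a point of zero excess at distance `≥ r` from `p` and `q`.
  set σ : ℕ → ℝ := fun n => 1 / ((n : ℝ) + 1)
  have hσ : ∀ n, 0 < σ n := fun n => by positivity
  have : Nonempty M := ⟨o⟩
  choose! x hx using fun (n : ℕ) (B : Set M) (hB : Charges μ B) =>
    hB.exists_inter_excess_le_inter_closedBall hpq hg hμF hμ hμg (hσ n)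
  set A : ℕ → Set M := fun n => Nat.rec ({z | r ≤ infDist z {p, q}} ∩ {z | excess p q z ≤ 1})
    (fun n B => B ∩ {z | excess p q z ≤ σ n} ∩ closedBall (x n B) (σ n)) n
  have hA : ∀ n, Charges μ (A n) ∧ IsClosed (A n) := by
    intro n
    induction n with
    | zero =>
      exact ⟨charges_inter_excess_le hpq hg hμ hμg hw hμw one_pos,
        (isClosed_le continuous_const (continuous_infDist_pt _)).inter
          (isClosed_le (continuous_excess p q) continuous_const)⟩
    | succ n ih =>
      exact ⟨hx n _ ih.1, (ih.2.inter (isClosed_le (continuous_excess p q) continuous_const)).inter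
        isClosed_closedBall⟩
  have hanti : Antitone A :=
    antitone_nat_of_succ_le fun n => inter_subset_left.trans inter_subset_left
  obtain ⟨z, hz⟩ := Metric.nonempty_iInter_of_nonempty_biInter (s := fun n => A (n + 1))
    (fun n => (hA (n + 1)).2) (fun n => isBounded_closedBall.subset inter_subset_right)
    (fun N => (hA (N + 1)).1.nonempty.mono
      (subset_iInter₂ fun n hn => hanti (by omega : n + 1 ≤ N + 1)))
    (squeeze_zero (fun _ => diam_nonneg)
      (fun n => (diam_mono inter_subset_right isBounded_closedBall).trans
        (diam_closedBall (hσ n).le))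
      (by simpa [σ] using ((tendsto_one_div_add_atTop_nhds_zero_nat (𝕜 := ℝ)).const_mul 2)))
  rw [mem_iInter] at hz
  have hexcess : excess p q z = 0 :=
    le_antisymm (ge_of_tendsto' tendsto_one_div_add_atTop_nhds_zero_nat fun n => (hz n).1.2)
      (excess_nonneg p q z)
  have hzr : r ≤ infDist z {p, q} := (hz 0).1.1.1
  rcases eq_or_eq_of_excess_eq_zero hseg hexcess with rfl | rfl <;>
    simp [infDist_zero_of_mem] at hzr <;> linarith

lemma apply_eq_zero_of_eqOn_pair [CompleteSpace M] (hpq : p ≠ q)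
    (hseg : {z : M | dist p q = dist z p + dist z q} = {p, q})
    (hg : ∀ t, g t = magicFun o p q t) (hμF : μ ∈ FreeSpace M o) (hμ : ‖μ‖ ≤ 1) (hμg : μ g = 1)
    {f : Lip0 M o} (hfp : f p = 0) (hfq : f q = 0) : μ f = 0 :=
  FreeSpace.apply_eq_zero_of_eqOn_zero hμF (insert_nonempty p {q})
    (fun _ _ hr hw => apply_eq_zero_of_le_infDist hpq hseg hg hμF hμ hμg hr hw)
    (by simp [hfp, hfq])

lemma apply_eq_zero_of_apply_left_eq_apply_right [CompleteSpace M] (hpq : p ≠ q)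
    (hseg : {z : M | dist p q = dist z p + dist z q} = {p, q})
    (hg : ∀ t, g t = magicFun o p q t) (hμF : μ ∈ FreeSpace M o) (hμ : ‖μ‖ ≤ 1) (hμg : μ g = 1)
    {F : Lip0 M o} (hF : F p = F q) : μ F = 0 := by
  have hker {f : Lip0 M o} (hfp : f p = 0) (hfq : f q = 0) : μ f = 0 :=
    apply_eq_zero_of_eqOn_pair hpq hseg hg hμF hμ hμg hfp hfq
  rcases (excess_nonneg p q o).eq_or_lt with h0 | hpos
  · rcases eq_or_eq_of_excess_eq_zero hseg h0.symm with rfl | rfl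
    · exact hker F.map_base (hF ▸ F.map_base)
    · exact hker (hF.trans F.map_base) F.map_base
  obtain ⟨h₁, hh₁, hh₁n⟩ : ∃ h : Lip0 M o, (∀ t, h t = dist o p - dist t p) ∧ ‖h‖ ≤ 1 :=
    ⟨Lip0.ofLipschitzWith _ (LipschitzWith.dist_left p).neg, fun t => by simp; ring,
      by simpa using Lip0.norm_ofLipschitzWith_le _ (LipschitzWith.dist_left p).neg⟩
  obtain ⟨h₂, hh₂, hh₂n⟩ : ∃ h : Lip0 M o, (∀ t, h t = dist t q - dist o q) ∧ ‖h‖ ≤ 1 :=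
    ⟨Lip0.ofLipschitzWith _ (LipschitzWith.dist_left q), fun t => by simp,
      by simpa using Lip0.norm_ofLipschitzWith_le _ (LipschitzWith.dist_left q)⟩
  have hgq := apply_right_eq_of_magicFun hpq hg
  have hgp := magicFun_left_mem_Ioo hpq hpos
  rw [← hg] at hgp
  -- `h₁ - g` and `h₂ - g` are constant on `{p, q}`, with values of opposite signs there,
  -- and `μ` is `≤ 0` on both; the cross relation then forces `μ (h₁ - g) = 0`.
  have h₁pq : (h₁ - g) p = (h₁ - g) q := by simp [hh₁, hgq, dist_comm p q]
  have h₂pq : (h₂ - g) p = (h₂ - g) q := by simp [hh₂, hgq]; ring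
  have h₁p : 0 < (h₁ - g) p := by simp [hh₁, hgp.2]
  have h₂p : (h₂ - g) p < 0 := by simp [hh₂]; linarith [hgp.1]
  have hμ₁ : μ (h₁ - g) ≤ 0 := by
    linarith [map_sub μ h₁ g, apply_le_one_of_norm_le_one hμ hh₁n]
  have hμ₂ : μ (h₂ - g) ≤ 0 := by
    linarith [map_sub μ h₂ g, apply_le_one_of_norm_le_one hμ hh₂n]
  have hμ₁0 : μ (h₁ - g) = 0 := by
    nlinarith [mul_apply_eq_mul_apply_of_ker (fun _ => hker) h₁pq h₂pq]
  have := mul_apply_eq_mul_apply_of_ker (fun _ => hker) hF h₁pq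
  rw [hμ₁0, mul_zero] at this
  exact (mul_eq_zero.1 this).resolve_left h₁p.ne'

lemma eq_molecule [CompleteSpace M] (hpq : p ≠ q)
    (hseg : {z : M | dist p q = dist z p + dist z q} = {p, q})
    (hg : ∀ t, g t = magicFun o p q t) (hμF : μ ∈ FreeSpace M o) (hμ : ‖μ‖ ≤ 1) (hμg : μ g = 1) :
    μ = molecule o p q := by
  have hgq := apply_right_eq_of_magicFun hpq hg
  ext F
  have := apply_eq_zero_of_apply_left_eq_apply_right hpq hseg hg hμF hμ hμg
    (F := F - ((F p - F q) / dist p q) • g) (by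
      simp only [Lip0.sub_apply, Lip0.coe_smul, hgq]
      field_simp [(dist_pos.2 hpq).ne']
      ring)
  rw [map_sub, map_smul, hμg, smul_eq_mul, mul_one, sub_eq_zero] at this
  rw [this, molecule_apply, div_eq_inv_mul]

end Exposed

/-- Main theorem: if `M` is complete and `[p,q] = {p,q}`, then the molecule `m_{pq}` is an
exposed point of the unit ball of `F(M)`, exposed by the magic function `f_{pq}`: the
magic function has Lipschitz norm `1`, pairs to `1` with `m_{pq}`, and pairs to strictly
less than `1` with every other element of the closed unit ball of `F(M)`. -/
theorem stmt_14 {M : Type*} [MetricSpace M] [CompleteSpace M] (o p q : M) (hpq : p ≠ q)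
    (hseg : {z : M | dist p q = dist z p + dist z q} = {p, q})
    (g : Lip0 M o) (hg : ∀ t, g t = magicFun o p q t) :
    ‖g‖ = 1 ∧ molecule o p q g = 1 ∧
      ∀ μ : StrongDual ℝ (Lip0 M o), μ ∈ FreeSpace M o → ‖μ‖ ≤ 1 →
        μ ≠ molecule o p q → μ g < 1 := by
  have hnorm := norm_eq_one_of_magicFun hpq hg
  refine ⟨hnorm, molecule_apply_eq_one hpq hg, fun μ hμF hμ hne => ?_⟩
  exact (apply_le_one_of_norm_le_one hμ hnorm.le).lt_of_ne fun hμg =>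
    hne (eq_molecule hpq hseg hg hμF hμ hμg)
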